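/- (Theorem 5 instance: convergence of SR1 Hessian approximations on a subspace.) Let L : ℝⁿ → ℝ be twice continuously differentiable with Hessian ∇²L Lipschitz continuous with constant c₃, and let c₁ ∈ (0,1). Let (wᵏ)ₖ be a sequence in ℝⁿ converging to w*, set sᵏ = wᵏ⁺¹ − wᵏ and yᵏ = ∇L(wᵏ⁺¹) − ∇L(wᵏ), and let symmetric matrices (Hᵏ)ₖ be generated by the symmetric rank-one (SR1) update Hᵏ⁺¹ = Hᵏ + (ρᵏ (ρᵏ)ᵀ)/((ρᵏ)ᵀ sᵏ) with ρᵏ = yᵏ − Hᵏ sᵏ, where at every iteration the skipping condition |(ρᵏ)ᵀ sᵏ| ≥ c₁ ‖sᵏ‖ ‖ρᵏ‖ holds (with (ρᵏ)ᵀsᵏ ≠ 0). Let N ∈ ℝ^{n×q} have orthonormal columns and assume uniform linear independence of the steps in the range of N: there exist c₄ > 0, an integer l ≥ q, and k₀ such that for each k ≥ k₀ there exist q distinct indices k ≤ k¹ < … < k^q ≤ k + l and nonzero vectors v¹, …, v^q ∈ ℝ^q with s^{kʲ} = N vʲ, such that the matrix with columns vʲ/‖vʲ‖ has minimum singular value at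 least c₄. Then lim_{k→∞} ‖(Hᵏ − ∇²L(w*)) N‖ = 0. -/

import Mathlib

/-!
Write `A = ∇²L(w*)` and `e k = c₃ (‖w k - w*‖ + ‖w (k+1) - w*‖)`; by the mean value theorem
`‖y k - A s k‖ ≤ e k ‖s k‖`. The SR1 update enforces the secant equation `H (k+1) s k = y k`.
A later update `m` changes `(H m - A) u` by a multiple of `ρ m` whose size is controlled by
`⟪ρ m, u⟫ = ⟪y m - A s m, u⟫ - ⟪s m, (H m - A) u⟫` (symmetry of `H m` and `A`) together with the
skipping condition, so the error on an old step grows at most by the factor `1 + 1/c₁` per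
update, plus the new secant error. Hence after the window `[K, K + l]` the error is
`O(∑_{i ∈ [K, K+l]} e i)` on every step of the window; as `q` of these steps span the range of `N`
with minimum singular value `≥ c₄`, this bounds `‖(H (K+l+1) - A) N‖`, and `e k → 0`.
-/

open scoped RealInnerProductSpace Matrix Matrix.Norms.L2Operator
open Filter

noncomputable def matVec {m n : ℕ} (A : Matrix (Fin m) (Fin n) ℝ)
    (v : EuclideanSpace ℝ (Fin n)) : EuclideanSpace ℝ (Fin m) :=
  Matrix.toEuclideanLin A v

def outer {m n : ℕ} (u : EuclideanSpace ℝ (Fin m)) (v : EuclideanSpace ℝ (Fin n)) :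
    Matrix (Fin m) (Fin n) ℝ :=
  Matrix.of fun i j => u i * v j

theorem norm_sub_sub_fderiv_le_of_lipschitzAt {E F : Type*} [NormedAddCommGroup E]
    [NormedSpace ℝ E] [NormedAddCommGroup F] [NormedSpace ℝ F] {f : E → F}
    {f' : E → E →L[ℝ] F} {x : E} {c : ℝ} (hc : 0 ≤ c)
    (hf : ∀ z, HasFDerivAt f (f' z) z) (hf' : ∀ z, ‖f' z - f' x‖ ≤ c * ‖z - x‖) (a b : E) :
    ‖f b - f a - f' x (b - a)‖ ≤ c * (‖a - x‖ + ‖b - x‖) * ‖b - a‖ := by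
  refine (convex_segment a b).norm_image_sub_le_of_norm_hasFDerivWithin_le'
    (fun z _ => (hf z).hasFDerivWithinAt) (fun z hz => ?_) (left_mem_segment ℝ a b)
    (right_mem_segment ℝ a b)
  have hr : ∀ p ∈ ({a, b} : Set E), dist p x ≤ ‖a - x‖ + ‖b - x‖ := by
    rintro p (rfl | rfl) <;> simp [dist_eq_norm]
  have hzx : dist z x ≤ ‖a - x‖ + ‖b - x‖ :=
    (convex_closedBall x _).segment_subset (hr a (by simp)) (hr b (by simp)) hz
  rw [dist_eq_norm] at hzx
  exact (hf' z).trans (by gcongr)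

section InnerProductSpace

variable {E : Type*} [NormedAddCommGroup E] [InnerProductSpace ℝ E]

theorem isSymmetric_of_hasGradientAt_of_hasFDerivAt [CompleteSpace E] {L : E → ℝ} {g : E → E}
    {A : E →L[ℝ] E} {x : E} (hg : ∀ w, HasGradientAt L (g w) w) (hA : HasFDerivAt g A x) :
    (A : E →ₗ[ℝ] E).IsSymmetric := by
  have hL : ∀ w, HasFDerivAt L (innerSL ℝ (g w)) w := fun w => (hg w).hasFDerivAt
  intro u v
  exact (second_derivative_symmetric hL ((innerSL ℝ).hasFDerivAt.comp x hA) u v).trans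
    (real_inner_comm u (A v))

theorem sr1_secant {H H' : E →ₗ[ℝ] E} {s y ρ : E} (hρ : ρ = y - H s) (hne : ⟪ρ, s⟫ ≠ 0)
    (hupd : ∀ x, H' x = H x + (⟪ρ, x⟫ / ⟪ρ, s⟫) • ρ) : H' s = y := by
  rw [hupd, div_self hne, one_smul, hρ, add_sub_cancel]

theorem sr1_norm_sub_apply_le {A H H' : E →ₗ[ℝ] E} (hA : A.IsSymmetric) (hH : H.IsSymmetric)
    {s y ρ : E} {c₁ e : ℝ} (hc₁ : 0 < c₁) (he : 0 ≤ e) (hρ : ρ = y - H s)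
    (hupd : ∀ x, H' x = H x + (⟪ρ, x⟫ / ⟪ρ, s⟫) • ρ) (hskip : c₁ * ‖s‖ * ‖ρ‖ ≤ |⟪ρ, s⟫|)
    (hy : ‖y - A s‖ ≤ e * ‖s‖) (u : E) :
    ‖H' u - A u‖ ≤ (1 + 1 / c₁) * ‖H u - A u‖ + e * ‖u‖ / c₁ := by
  set X := e * ‖u‖ + ‖H u - A u‖
  have hX : 0 ≤ X := by positivity
  have hinner : |⟪ρ, u⟫| ≤ ‖s‖ * X := by
    have hsplit : ⟪ρ, u⟫ = ⟪y - A s, u⟫ - ⟪s, H u - A u⟫ := by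
      rw [hρ, inner_sub_right s, ← hH, ← hA, inner_sub_left, inner_sub_left]
      ring
    calc |⟪ρ, u⟫| ≤ ‖y - A s‖ * ‖u‖ + ‖s‖ * ‖H u - A u‖ := by
          rw [hsplit]
          exact (abs_sub _ _).trans (add_le_add (abs_real_inner_le_norm _ _)
            (abs_real_inner_le_norm _ _))
      _ ≤ e * ‖s‖ * ‖u‖ + ‖s‖ * ‖H u - A u‖ := by gcongr
      _ = ‖s‖ * X := by ring
  have hcorr : ‖(⟪ρ, u⟫ / ⟪ρ, s⟫) • ρ‖ ≤ X / c₁ := by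
    rcases eq_or_ne ⟪ρ, s⟫ 0 with h0 | h0
    · simp only [h0, div_zero, zero_smul, norm_zero]
      positivity
    rw [norm_smul, norm_div, Real.norm_eq_abs, Real.norm_eq_abs, div_mul_eq_mul_div,
      div_le_div_iff₀ (abs_pos.2 h0) hc₁]
    calc |⟪ρ, u⟫| * ‖ρ‖ * c₁ ≤ ‖s‖ * X * ‖ρ‖ * c₁ := by gcongr
      _ = X * (c₁ * ‖s‖ * ‖ρ‖) := by ring
      _ ≤ X * |⟪ρ, s⟫| := by gcongr
  calc ‖H' u - A u‖ = ‖(H u - A u) + (⟪ρ, u⟫ / ⟪ρ, s⟫) • ρ‖ := by rw [hupd]; abel_nf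
    _ ≤ ‖H u - A u‖ + X / c₁ := norm_add_le_of_le le_rfl hcorr
    _ = (1 + 1 / c₁) * ‖H u - A u‖ + e * ‖u‖ / c₁ := by ring

theorem sr1_norm_sub_apply_le_sum {A : E →ₗ[ℝ] E} {H : ℕ → E →ₗ[ℝ] E} {s y ρ : ℕ → E}
    {c₁ : ℝ} {e : ℕ → ℝ} (hA : A.IsSymmetric) (hH : ∀ k, (H k).IsSymmetric) (hc₁ : 0 < c₁)
    (he : ∀ k, 0 ≤ e k) (hρ : ∀ k, ρ k = y k - H k (s k)) (hne : ∀ k, ⟪ρ k, s k⟫ ≠ 0)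
    (hupd : ∀ k x, H (k + 1) x = H k x + (⟪ρ k, x⟫ / ⟪ρ k, s k⟫) • ρ k)
    (hskip : ∀ k, c₁ * ‖s k‖ * ‖ρ k‖ ≤ |⟪ρ k, s k⟫|)
    (hy : ∀ k, ‖y k - A (s k)‖ ≤ e k * ‖s k‖) {K k m : ℕ} (hKk : K ≤ k) (hkm : k ≤ m) :
    ‖H (m + 1) (s k) - A (s k)‖
      ≤ (1 + 1 / c₁) ^ (m - K) * (∑ i ∈ Finset.Icc K m, e i) * ‖s k‖ := by
  have hγ : 1 ≤ 1 + 1 / c₁ := le_add_of_nonneg_right (by positivity)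
  induction m, hkm using Nat.le_induction with
  | base =>
    rw [sr1_secant (hρ k) (hne k) (hupd k)]
    refine (hy k).trans (mul_le_mul_of_nonneg_right ?_ (norm_nonneg _))
    calc e k ≤ ∑ i ∈ Finset.Icc K k, e i :=
          Finset.single_le_sum (fun i _ => he i) (Finset.mem_Icc.2 ⟨hKk, le_rfl⟩)
      _ ≤ (1 + 1 / c₁) ^ (k - K) * ∑ i ∈ Finset.Icc K k, e i :=
          le_mul_of_one_le_left (Finset.sum_nonneg fun i _ => he i) (one_le_pow₀ hγ)
  | succ m hkm ih =>
    have hpow : 1 / c₁ ≤ (1 + 1 / c₁) ^ (m + 1 - K) :=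
      (le_add_of_nonneg_left zero_le_one).trans (le_self_pow₀ hγ (by omega))
    calc ‖H (m + 1 + 1) (s k) - A (s k)‖
        ≤ (1 + 1 / c₁) * ‖H (m + 1) (s k) - A (s k)‖ + e (m + 1) * ‖s k‖ / c₁ :=
          sr1_norm_sub_apply_le hA (hH _) hc₁ (he _) (hρ _) (hupd _) (hskip _) (hy _) _
      _ ≤ (1 + 1 / c₁) * ((1 + 1 / c₁) ^ (m - K) * (∑ i ∈ Finset.Icc K m, e i) * ‖s k‖)
          + (1 + 1 / c₁) ^ (m + 1 - K) * e (m + 1) * ‖s k‖ := by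
          refine add_le_add (mul_le_mul_of_nonneg_left ih (by positivity)) ?_
          calc e (m + 1) * ‖s k‖ / c₁ = 1 / c₁ * (e (m + 1) * ‖s k‖) := by ring
            _ ≤ (1 + 1 / c₁) ^ (m + 1 - K) * (e (m + 1) * ‖s k‖) := by
              gcongr
              exact mul_nonneg (he _) (norm_nonneg _)
            _ = (1 + 1 / c₁) ^ (m + 1 - K) * e (m + 1) * ‖s k‖ := by ring
      _ = (1 + 1 / c₁) ^ (m + 1 - K) * (∑ i ∈ Finset.Icc K (m + 1), e i) * ‖s k‖ := by
          rw [Finset.sum_Icc_succ_top (by omega), Nat.sub_add_comm (hKk.trans hkm), pow_succ]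
          ring

end InnerProductSpace

theorem norm_map_sum_smul_le {E F ι : Type*} [NormedAddCommGroup E] [NormedSpace ℝ E]
    [NormedAddCommGroup F] [NormedSpace ℝ F] [Fintype ι] (T : E →ₗ[ℝ] F) {u : ι → E}
    {β c : ℝ} (hc : 0 < c) (hβ : 0 ≤ β) (hTu : ∀ j, ‖T (u j)‖ ≤ β)
    (hu : ∀ z : EuclideanSpace ℝ ι, c * ‖z‖ ≤ ‖∑ j, z j • u j‖) (z : EuclideanSpace ℝ ι) :
    ‖T (∑ j, z j • u j)‖ ≤ Fintype.card ι * β / c * ‖∑ j, z j • u j‖ := by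
  have hz : ‖z‖ ≤ ‖∑ j, z j • u j‖ / c := by rw [le_div_iff₀ hc, mul_comm]; exact hu z
  calc ‖T (∑ j, z j • u j)‖ ≤ ∑ j, ‖z j‖ * ‖T (u j)‖ := by
        rw [map_sum]
        refine (norm_sum_le _ _).trans_eq ?_
        simp only [map_smul, norm_smul]
    _ ≤ ∑ _j : ι, ‖z‖ * β := by
        gcongr with j
        · exact PiLp.norm_apply_le z j
        · exact hTu j
    _ = Fintype.card ι * β * ‖z‖ := by
        rw [Finset.sum_const, Finset.card_univ, nsmul_eq_mul]; ring
    _ ≤ Fintype.card ι * β * (‖∑ j, z j • u j‖ / c) := by gcongr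
    _ = Fintype.card ι * β / c * ‖∑ j, z j • u j‖ := by ring

theorem matVec_sub_left {m n : ℕ} (A B : Matrix (Fin m) (Fin n) ℝ)
    (v : EuclideanSpace ℝ (Fin n)) : matVec (A - B) v = matVec A v - matVec B v := by
  simp [matVec]

theorem matVec_mul {m n p : ℕ} (A : Matrix (Fin m) (Fin n) ℝ) (B : Matrix (Fin n) (Fin p) ℝ)
    (v : EuclideanSpace ℝ (Fin p)) : matVec (A * B) v = matVec A (matVec B v) := by
  simp [matVec]

theorem matVec_add_smul_outer {m n : ℕ} (A : Matrix (Fin m) (Fin n) ℝ) (a : ℝ)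
    (u : EuclideanSpace ℝ (Fin m)) (v x : EuclideanSpace ℝ (Fin n)) :
    matVec (A + a • outer u v) x = matVec A x + (a * ⟪v, x⟫) • u := by
  ext i
  simp [matVec, outer, Matrix.mulVec, dotProduct, PiLp.inner_apply, Finset.mul_sum, mul_assoc,
    mul_comm, mul_left_comm]

theorem norm_matVec_of_transpose_mul_self_eq_one {m p : ℕ} {N : Matrix (Fin m) (Fin p) ℝ}
    (hN : Nᵀ * N = 1) (v : EuclideanSpace ℝ (Fin p)) : ‖matVec N v‖ = ‖v‖ := by
  have h : ⟪matVec N v, matVec N v⟫ = ⟪v, v⟫ := by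
    rw [matVec, ← LinearMap.adjoint_inner_right, ← Matrix.toEuclideanLin_conjTranspose_eq_adjoint,
      Matrix.conjTranspose_eq_transpose_of_trivial, ← LinearMap.comp_apply,
      ← Matrix.toLpLin_mul_same, hN, Matrix.toLpLin_one, LinearMap.id_apply]
  rwa [real_inner_self_eq_norm_sq, real_inner_self_eq_norm_sq, sq_eq_sq₀ (norm_nonneg _)
    (norm_nonneg _)] at h

theorem surjective_matVec_of_lowerBound {q : ℕ} {V : Matrix (Fin q) (Fin q) ℝ} {c : ℝ}
    (hc : 0 < c) (hV : ∀ x, c * ‖x‖ ≤ ‖matVec V x‖) : Function.Surjective (matVec V) := by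
  refine LinearMap.injective_iff_surjective.mp fun x x' hxx' => ?_
  have := hV (x - x')
  rw [matVec, map_sub, sub_eq_zero.2 hxx', norm_zero] at this
  exact sub_eq_zero.1 (norm_le_zero_iff.1 (nonpos_of_mul_nonpos_right this hc))

theorem matVec_of_div_norm {q : ℕ} (v : Fin q → EuclideanSpace ℝ (Fin q))
    (z : EuclideanSpace ℝ (Fin q)) :
    matVec (Matrix.of fun i j => v j i / ‖v j‖) z = ∑ j, z j • (‖v j‖⁻¹ • v j) := by
  ext i
  simp [matVec, Matrix.mulVec, dotProduct, div_eq_mul_inv, mul_comm]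

theorem l2_opNorm_le_of_lowerBound_of_norm_matVec_le {m q : ℕ} (T : Matrix (Fin m) (Fin q) ℝ)
    {v : Fin q → EuclideanSpace ℝ (Fin q)} {c β : ℝ} (hc : 0 < c) (hβ : 0 ≤ β)
    (hTv : ∀ j, ‖matVec T (v j)‖ ≤ β * ‖v j‖)
    (hV : ∀ x, c * ‖x‖ ≤ ‖matVec (Matrix.of fun i j => v j i / ‖v j‖) x‖) :
    ‖T‖ ≤ q * β / c := by
  have hTu : ∀ j, ‖Matrix.toEuclideanLin T (‖v j‖⁻¹ • v j)‖ ≤ β := by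
    intro j
    rw [map_smul, norm_smul, norm_inv, norm_norm]
    rcases eq_or_ne (v j) 0 with h0 | h0
    · simpa [h0] using hβ
    · exact (inv_mul_le_iff₀ (norm_pos_iff.2 h0)).2 ((hTv j).trans_eq (mul_comm _ _))
  rw [Matrix.l2_opNorm_def]
  refine ContinuousLinearMap.opNorm_le_bound _ (by positivity) fun x => ?_
  obtain ⟨z, rfl⟩ := surjective_matVec_of_lowerBound hc hV x
  simp only [matVec_of_div_norm] at hV ⊢
  simpa using norm_map_sum_smul_le (Matrix.toEuclideanLin T) hc hβ hTu hV z

theorem tendsto_sum_Icc_add_atTop_zero {e : ℕ → ℝ} (he : Tendsto e atTop (nhds 0)) (l : ℕ) :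
    Tendsto (fun K => ∑ i ∈ Finset.Icc K (K + l), e i) atTop (nhds 0) := by
  have hshift : ∀ i, Tendsto (fun K => e (K + i)) atTop (nhds 0) := fun i =>
    (tendsto_add_atTop_iff_nat i).2 he
  simpa [← Finset.Ico_add_one_right_eq_Icc, Finset.sum_Ico_eq_sum_range, add_assoc]
    using tendsto_finsetSum (Finset.range (l + 1)) fun i _ => hshift i

theorem sr1_hessian_convergence_on_nullspace_general {n q : ℕ}
    (c₁ c₃ : ℝ) (hc₁0 : 0 < c₁)
    (L : EuclideanSpace ℝ (Fin n) → ℝ)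
    (g : EuclideanSpace ℝ (Fin n) → EuclideanSpace ℝ (Fin n))
    (hg : ∀ w, HasGradientAt L (g w) w)
    (G : EuclideanSpace ℝ (Fin n) → Matrix (Fin n) (Fin n) ℝ)
    (hG : ∀ w, HasFDerivAt g (Matrix.toEuclideanCLM (𝕜 := ℝ) (G w)) w)
    (hLip : ∀ w₁ w₂, ‖G w₁ - G w₂‖ ≤ c₃ * ‖w₁ - w₂‖)
    (w : ℕ → EuclideanSpace ℝ (Fin n))
    (wstar : EuclideanSpace ℝ (Fin n)) (hconv : Tendsto w atTop (nhds wstar))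
    (s : ℕ → EuclideanSpace ℝ (Fin n)) (hs : ∀ k, s k = w (k + 1) - w k)
    (y : ℕ → EuclideanSpace ℝ (Fin n)) (hy : ∀ k, y k = g (w (k + 1)) - g (w k))
    (H : ℕ → Matrix (Fin n) (Fin n) ℝ) (hHsymm : ∀ k, (H k).IsSymm)
    (ρ : ℕ → EuclideanSpace ℝ (Fin n)) (hρ : ∀ k, ρ k = y k - matVec (H k) (s k))
    (hne : ∀ k, ⟪ρ k, s k⟫ ≠ 0)
    (hskip : ∀ k, c₁ * ‖s k‖ * ‖ρ k‖ ≤ |⟪ρ k, s k⟫|)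
    (hupd : ∀ k, H (k + 1) = H k + (1 / ⟪ρ k, s k⟫) • outer (ρ k) (ρ k))
    (N : Matrix (Fin n) (Fin q) ℝ) (hN : Nᵀ * N = 1)
    (c₄ : ℝ) (hc₄ : 0 < c₄) (l k₀ : ℕ)
    (hULI : ∀ k, k₀ ≤ k → ∃ ks : Fin q → ℕ, StrictMono ks ∧
      (∀ j, k ≤ ks j ∧ ks j ≤ k + l) ∧
      ∃ v : Fin q → EuclideanSpace ℝ (Fin q), (∀ j, v j ≠ 0) ∧
        (∀ j, s (ks j) = matVec N (v j)) ∧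
        (∀ x : EuclideanSpace ℝ (Fin q),
          c₄ * ‖x‖ ≤ ‖matVec (Matrix.of fun i j => v j i / ‖v j‖) x‖)) :
    Tendsto (fun k => ‖(H k - G wstar) * N‖) atTop (nhds 0) := by
  set c := max c₃ 0
  set e : ℕ → ℝ := fun k => c * (‖w k - wstar‖ + ‖w (k + 1) - wstar‖)
  have he0 : ∀ k, 0 ≤ e k := fun k => by positivity
  have hA : (Matrix.toEuclideanLin (G wstar)).IsSymmetric :=
    isSymmetric_of_hasGradientAt_of_hasFDerivAt hg (hG wstar)
  have hy' : ∀ k, ‖y k - matVec (G wstar) (s k)‖ ≤ e k * ‖s k‖ := fun k => by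
    rw [hy, hs]
    refine norm_sub_sub_fderiv_le_of_lipschitzAt (le_max_right _ _) hG (fun z => ?_) _ _
    rw [← map_sub, Matrix.l2_opNorm_toEuclideanCLM]
    exact (hLip z wstar).trans (by gcongr; exact le_max_left _ _)
  have hupd' : ∀ k x, matVec (H (k + 1)) x = matVec (H k) x + (⟪ρ k, x⟫ / ⟪ρ k, s k⟫) • ρ k :=
    fun k x => by rw [hupd, matVec_add_smul_outer, one_div_mul_eq_div]
  have hwin : ∀ K, k₀ ≤ K → ‖(H (K + l + 1) - G wstar) * N‖
      ≤ q * ((1 + 1 / c₁) ^ l * ∑ i ∈ Finset.Icc K (K + l), e i) / c₄ := by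
    intro K hK
    obtain ⟨ks, -, hks, v, -, hsv, hV⟩ := hULI K hK
    refine l2_opNorm_le_of_lowerBound_of_norm_matVec_le _ hc₄ (by positivity) (fun j => ?_) hV
    rw [← norm_matVec_of_transpose_mul_self_eq_one hN, matVec_mul, ← hsv, matVec_sub_left]
    refine (sr1_norm_sub_apply_le_sum hA (fun k => Matrix.isSymmetric_toEuclideanLin_iff.2
      (Matrix.isHermitian_iff_isSymm.2 (hHsymm k))) hc₁0 he0 hρ hne hupd' hskip hy' (hks j).1
      (hks j).2).trans_eq ?_
    rw [Nat.add_sub_cancel_left]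
  have he : Tendsto e atTop (nhds 0) := by
    have hd : Tendsto (fun k => ‖w k - wstar‖) atTop (nhds 0) :=
      tendsto_iff_norm_sub_tendsto_zero.1 hconv
    simpa using (hd.add ((tendsto_add_atTop_iff_nat 1).2 hd)).const_mul c
  rw [← tendsto_add_atTop_iff_nat (l + 1)]
  refine squeeze_zero' (Eventually.of_forall fun K => norm_nonneg _)
    ((eventually_ge_atTop k₀).mono hwin) ?_
  simpa using ((tendsto_sum_Icc_add_atTop_zero he l).const_mul _).const_mul _ |>.div_const c₄

/-- Theorem 5 instance: convergence of the SR1 Hessian approximations to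
the exact Hessian `∇²L(w*)` on the range of `N`, under the skipping condition and the
uniform linear independence assumption.  Here `g` is the gradient of `L` and `G w` is the
Hessian matrix of `L` at `w`; "minimum singular value at least `c₄`" is expressed as
`c₄‖x‖ ≤ ‖V x‖` for all `x`. -/
theorem sr1_hessian_convergence_on_nullspace {n q : ℕ}
    (c₁ c₃ : ℝ) (hc₁0 : 0 < c₁) (hc₁1 : c₁ < 1)
    (L : EuclideanSpace ℝ (Fin n) → ℝ) (hL : ContDiff ℝ 2 L)
    (g : EuclideanSpace ℝ (Fin n) → EuclideanSpace ℝ (Fin n))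
    (hg : ∀ w, HasGradientAt L (g w) w)
    (G : EuclideanSpace ℝ (Fin n) → Matrix (Fin n) (Fin n) ℝ)
    (hG : ∀ w, HasFDerivAt g (Matrix.toEuclideanCLM (𝕜 := ℝ) (G w)) w)
    (hLip : ∀ w₁ w₂, ‖G w₁ - G w₂‖ ≤ c₃ * ‖w₁ - w₂‖)
    (w : ℕ → EuclideanSpace ℝ (Fin n))
    (wstar : EuclideanSpace ℝ (Fin n)) (hconv : Tendsto w atTop (nhds wstar))
    (s : ℕ → EuclideanSpace ℝ (Fin n)) (hs : ∀ k, s k = w (k + 1) - w k)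
    (y : ℕ → EuclideanSpace ℝ (Fin n)) (hy : ∀ k, y k = g (w (k + 1)) - g (w k))
    (H : ℕ → Matrix (Fin n) (Fin n) ℝ) (hHsymm : ∀ k, (H k).IsSymm)
    (ρ : ℕ → EuclideanSpace ℝ (Fin n)) (hρ : ∀ k, ρ k = y k - matVec (H k) (s k))
    (hne : ∀ k, ⟪ρ k, s k⟫ ≠ 0)
    (hskip : ∀ k, c₁ * ‖s k‖ * ‖ρ k‖ ≤ |⟪ρ k, s k⟫|)
    (hupd : ∀ k, H (k + 1) = H k + (1 / ⟪ρ k, s k⟫) • outer (ρ k) (ρ k))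
    (N : Matrix (Fin n) (Fin q) ℝ) (hN : Nᵀ * N = 1)
    (c₄ : ℝ) (hc₄ : 0 < c₄) (l k₀ : ℕ) (hl : q ≤ l)
    (hULI : ∀ k, k₀ ≤ k → ∃ ks : Fin q → ℕ, StrictMono ks ∧
      (∀ j, k ≤ ks j ∧ ks j ≤ k + l) ∧
      ∃ v : Fin q → EuclideanSpace ℝ (Fin q), (∀ j, v j ≠ 0) ∧
        (∀ j, s (ks j) = matVec N (v j)) ∧
        (∀ x : EuclideanSpace ℝ (Fin q),
          c₄ * ‖x‖ ≤ ‖matVec (Matrix.of fun i j => v j i / ‖v j‖) x‖)) :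
    Tendsto (fun k => ‖(H k - G wstar) * N‖) atTop (nhds 0) :=
  sr1_hessian_convergence_on_nullspace_general c₁ c₃ hc₁0 L g hg G hG hLip w wstar hconv s hs y hy H
    hHsymm ρ hρ hne hskip hupd N hN c₄ hc₄ l k₀ hULI
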